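/- Let G be a MAGIIAN such that no two distinct locations of G are indistinguishable by all agents, i.e., whenever obs_i(l) = obs_i(l') for all i ∈ Agt, then l = l'. Then the MKBSC expansion G^K of G fulfills the PDK condition. -/
import Mathlib


open Set

/-- A multi-agent game with imperfect information against Nature (MAGIIAN).
`obs i l` is the observation block of agent `i` containing location `l`;
the axioms make the blocks of each agent a partition of the locations. -/
structure MAGIIAN (Agt Loc : Type) (Act : Agt → Type) where
  init : Loc
  trans : Loc → (∀ i, Act i) → Loc → Prop
  obs : Agt → Loc → Set Loc
  obs_mem : ∀ i l, l ∈ obs i l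
  obs_eq : ∀ i l l', l' ∈ obs i l → obs i l' = obs i l

namespace MAGIIAN

variable {Agt Loc : Type} {Act : Agt → Type}

/-- `o` is an observation (block) of agent `i` in `G`. -/
def IsObs (G : MAGIIAN Agt Loc Act) (i : Agt) (o : Set Loc) : Prop :=
  ∃ l, o = G.obs i l

/-- Transition relation `Δ_i` of the projection `G|_i`. -/
def projTrans (G : MAGIIAN Agt Loc Act) (i : Agt) (l : Loc) (a : Act i) (l' : Loc) : Prop :=
  ∃ σ : ∀ j, Act j, σ i = a ∧ G.trans l σ l'

/-- Transition relation `Δ^K_i` of the individual KBSC expansion `(G|_i)^K`. -/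
def kTrans (G : MAGIIAN Agt Loc Act) (i : Agt) (s : Set Loc) (a : Act i) (s' : Set Loc) : Prop :=
  ∃ o : Set Loc, G.IsObs i o ∧ s' = {l' ∈ o | ∃ l ∈ s, G.projTrans i l a l'} ∧ s'.Nonempty

/-- Pruned joint transition relation `Δ^K` of the MKBSC expansion `G^K`
(unrealisable transitions are removed). -/
def kTransJ (G : MAGIIAN Agt Loc Act) (s : Agt → Set Loc) (σ : ∀ i, Act i)
    (s' : Agt → Set Loc) : Prop :=
  (∀ i, G.kTrans i (s i) (σ i) (s' i)) ∧
    ∃ l ∈ (⋂ i, s i), ∃ l' ∈ (⋂ i, s' i), G.trans l σ l'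

/-- The MKBSC expansion `G^K`, as a MAGIIAN over joint knowledge states;
agent `i`'s observation of a joint knowledge state is determined by its `i`-th component. -/
def expand (G : MAGIIAN Agt Loc Act) : MAGIIAN Agt (Agt → Set Loc) Act where
  init := fun _ => {G.init}
  trans := G.kTransJ
  obs := fun i s => {s' | s' i = s i}
  obs_mem := fun _ _ => rfl
  obs_eq := by
    intro i s s' h
    simp only [Set.mem_setOf_eq] at h
    ext t
    simp [Set.mem_setOf_eq, h]

/-- Reachability from the initial location. -/
def Reachable (G : MAGIIAN Agt Loc Act) (l : Loc) : Prop :=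
  Relation.ReflTransGen (fun x y => ∃ σ, G.trans x σ y) G.init l

/-- The MKBSC expansion `G^K` fulfills the perfect-distributed-knowledge (PDK) condition:
every reachable joint knowledge state has singleton component intersection. -/
def PDK (G : MAGIIAN Agt Loc Act) : Prop :=
  ∀ s : Agt → Set Loc, G.expand.Reachable s → ∃ l : Loc, (⋂ i, s i) = {l}

/-- A full play, given as its sequences of locations and of joint actions. -/
def IsPlay (G : MAGIIAN Agt Loc Act) (l : ℕ → Loc) (σ : ℕ → ∀ i, Act i) : Prop :=
  l 0 = G.init ∧ ∀ k, G.trans (l k) (σ k) (l (k + 1))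

/-- Observation history of agent `i` (list of observation blocks) up to time `k`. -/
def obsHist (G : MAGIIAN Agt Loc Act) (i : Agt) (l : ℕ → Loc) (k : ℕ) : List (Set Loc) :=
  (List.range (k + 1)).map fun j => G.obs i (l j)

/-- Outcomes (location sequences) of a profile of observation-based
perfect-recall strategies. -/
def PROutcome (G : MAGIIAN Agt Loc Act) (α : ∀ i, List (Set Loc) → Act i)
    (l : ℕ → Loc) : Prop :=
  ∃ σ : ℕ → ∀ i, Act i, G.IsPlay l σ ∧ ∀ k i, σ k i = α i (G.obsHist i l k)

/-- Outcomes of a profile of observation-based memoryless strategies. -/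
def MLOutcome (G : MAGIIAN Agt Loc Act) (α : ∀ i, Set Loc → Act i) (l : ℕ → Loc) : Prop :=
  ∃ σ : ℕ → ∀ i, Act i, G.IsPlay l σ ∧ ∀ k i, σ k i = α i (G.obs i (l k))

/-- A play is winning for an observable reachability objective `R` iff some
agent at some point observes an observation in `R`. -/
def WinsReach (G : MAGIIAN Agt Loc Act) (R : Set (Set Loc)) (l : ℕ → Loc) : Prop :=
  ∃ i k, G.obs i (l k) ∈ R

/-- A play is winning for an observable safety objective `F` iff at every point
some agent observes an observation in `F`. -/
def WinsSafe (G : MAGIIAN Agt Loc Act) (F : Set (Set Loc)) (l : ℕ → Loc) : Prop :=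
  ∀ k, ∃ i, G.obs i (l k) ∈ F

/-- `ob_i`: maps an observation block of `G^K` for agent `i` (all of whose members have the
same `i`-th component `A`) to the unique observation of `i` in `G` that includes `A`. -/
def obMap (G : MAGIIAN Agt Loc Act) (i : Agt) (O : Set (Agt → Set Loc)) : Set Loc :=
  ⋃ s ∈ O, ⋃ l ∈ s i, G.obs i l

/-- The translated objective `R^K = {s ∈ S : ∃ i, ∃ o ∈ R ∩ Obs_i, s i ⊆ o}`,
as a set of joint knowledge states. -/
def transObj (G : MAGIIAN Agt Loc Act) (R : Set (Set Loc)) : Set (Agt → Set Loc) :=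
  {s | ∃ i, ∃ o ∈ R, G.IsObs i o ∧ s i ⊆ o}

end MAGIIAN


namespace MAGIIAN

variable {Agt Loc : Type} {Act : Agt → Type}

/-- If no two distinct locations of `G` are indistinguishable by all agents, then the
MKBSC expansion `G^K` of `G` fulfills the PDK condition. -/
theorem pdk_of_distinguishable (G : MAGIIAN Agt Loc Act)
    (h : ∀ l l' : Loc, (∀ i, G.obs i l = G.obs i l') → l = l') :
    G.PDK := by
  intro s hr
  suffices h2 : (⋂ i, s i).Nonempty ∧ ∀ i, ∃ o, G.IsObs i o ∧ s i ⊆ o by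
    obtain ⟨⟨l, hl⟩, ho⟩ := h2
    refine ⟨l, ?_⟩
    ext x
    simp only [Set.mem_singleton_iff]
    constructor
    · intro hx
      apply h
      intro i
      obtain ⟨o, ⟨m, hm⟩, hsub⟩ := ho i
      have hx' : x ∈ G.obs i m := hm ▸ hsub (Set.mem_iInter.mp hx i)
      have hl' : l ∈ G.obs i m := hm ▸ hsub (Set.mem_iInter.mp hl i)
      rw [G.obs_eq i m x hx', G.obs_eq i m l hl']
    · rintro rfl; exact hl
  induction hr with
  | refl =>
    constructor
    · exact ⟨G.init, Set.mem_iInter.mpr fun i => rfl⟩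
    · intro i
      refine ⟨G.obs i G.init, ⟨G.init, rfl⟩, ?_⟩
      intro x hx
      cases hx
      exact G.obs_mem i G.init
  | tail hprev step ih =>
    obtain ⟨σ, hk, l, hl, l', hl', htr⟩ := step
    refine ⟨⟨l', hl'⟩, ?_⟩
    intro i
    obtain ⟨o, ho, hs', _⟩ := hk i
    exact ⟨o, ho, by rw [hs']; exact Set.sep_subset _ _⟩

end MAGIIAN
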